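/- For all real x, ψ(x) = |x| + β(x²), where ψ(x) = x·E(x) + (1/(2π))E'(x) with E the Gauss error function, and β(t) = (1/(2π))∫₁^∞ u^{−3/2} e^{−πtu} du for t ≥ 0. -/

import Mathlib

/-!
For `x > 0` write `T(x) = ∫ₓ^∞ e^{−πs²} ds`, so that `E(x) = 1 − 2T(x)`. The substitution
`u = (s/x)²` turns `β(x²)` into `(x/π) ∫ₓ^∞ e^{−πs²}/s² ds`, and integrating by parts against
`d(−1/s)` evaluates this as `e^{−πx²}/π − 2x T(x)`; hence `ψ(x) = x + β(x²)`. Both sides are even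
in `x`, and at `x = 0` both equal `1/π`.
-/

open Real

/-- The Gauss error function `E(x) = 2∫₀ˣ e^{−πt²} dt`. -/
noncomputable def gaussE (x : ℝ) : ℝ := 2 * ∫ t in (0:ℝ)..x, Real.exp (-π * t ^ 2)

/-- `ψ(x) = x·E(x) + (1/(2π))·E'(x)`, where `E'(x) = 2e^{−πx²}`. -/
noncomputable def psiFn (x : ℝ) : ℝ :=
  x * gaussE x + (1 / (2 * π)) * (2 * Real.exp (-π * x ^ 2))

/-- `β(t) = (1/(2π)) ∫₁^∞ u^{−3/2} e^{−πtu} du`. -/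
noncomputable def betaFn (t : ℝ) : ℝ :=
  (1 / (2 * π)) * ∫ u in Set.Ioi (1:ℝ), u ^ (-(3:ℝ)/2) * Real.exp (-π * t * u)

open MeasureTheory Set Filter Topology

lemma integrableOn_exp_neg_mul_sq_div_sq {b a : ℝ} (hb : 0 < b) (ha : 0 < a) :
    IntegrableOn (fun s : ℝ => exp (-b * s ^ 2) / s ^ 2) (Ioi a) := by
  refine Integrable.mono' ((integrable_exp_neg_mul_sq hb).integrableOn.const_mul (a ^ 2)⁻¹)
    (Measurable.aestronglyMeasurable (by fun_prop)) ?_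
  filter_upwards [ae_restrict_mem measurableSet_Ioi] with s (hs : a < s)
  rw [norm_of_nonneg (by positivity), div_eq_mul_inv, mul_comm]
  gcongr

lemma integral_Ioi_exp_neg_mul_sq_div_sq {b a : ℝ} (hb : 0 < b) (ha : 0 < a) :
    ∫ s in Ioi a, exp (-b * s ^ 2) / s ^ 2
      = exp (-b * a ^ 2) / a - 2 * b * ∫ s in Ioi a, exp (-b * s ^ 2) := by
  have hgauss := (integrable_exp_neg_mul_sq hb).integrableOn (s := Ioi a)
  have hderiv : ∀ s ∈ Ici a, HasDerivAt (fun s : ℝ => -exp (-b * s ^ 2) / s)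
      (2 * b * exp (-b * s ^ 2) + exp (-b * s ^ 2) / s ^ 2) s := by
    intro s hs
    have hs0 : s ≠ 0 := (ha.trans_le hs).ne'
    have hexp := ((hasDerivAt_pow 2 s).const_mul (-b)).exp
    refine (hexp.neg.div (hasDerivAt_id s) hs0).congr_deriv ?_
    simp only [Pi.neg_apply, id]
    field_simp
    ring
  have hlim : Tendsto (fun s : ℝ => -exp (-b * s ^ 2) / s) atTop (𝓝 0) := by
    have hexp : Tendsto (fun s : ℝ => exp (-b * s ^ 2)) atTop (𝓝 0) := by
      exact tendsto_exp_atBot.comp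
        ((tendsto_pow_atTop two_ne_zero).const_mul_atTop_of_neg (neg_neg_of_pos hb))
    simpa [div_eq_mul_inv] using (hexp.mul tendsto_inv_atTop_zero).neg
  have key := integral_Ioi_of_hasDerivAt_of_tendsto' hderiv
    ((hgauss.const_mul _).add (integrableOn_exp_neg_mul_sq_div_sq hb ha)) hlim
  rw [integral_add (hgauss.const_mul _) (integrableOn_exp_neg_mul_sq_div_sq hb ha),
    integral_const_mul] at key
  linarith [neg_div a (exp (-b * a ^ 2))]

lemma image_div_sq_Ioi {a : ℝ} (ha : 0 < a) : (fun s : ℝ => (s / a) ^ 2) '' Ioi a = Ioi 1 := by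
  ext u
  constructor
  · rintro ⟨s, hs, rfl⟩
    exact one_lt_pow₀ ((one_lt_div ha).2 hs) two_ne_zero
  · intro (hu : 1 < u)
    refine ⟨a * √u, lt_mul_right ha (lt_sqrt zero_le_one |>.2 (by simpa using hu)), ?_⟩
    show (a * √u / a) ^ 2 = u
    rw [mul_div_cancel_left₀ _ ha.ne', sq_sqrt (zero_le_one.trans hu.le)]

lemma integral_Ioi_one_rpow_mul_comp_mul (f : ℝ → ℝ) {a : ℝ} (ha : 0 < a) :
    ∫ u in Ioi (1:ℝ), u ^ (-(3:ℝ)/2) * f (a ^ 2 * u)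
      = 2 * a * ∫ s in Ioi a, f (s ^ 2) / s ^ 2 := by
  have hderiv : ∀ s ∈ Ioi a,
      HasDerivWithinAt (fun s : ℝ => (s / a) ^ 2) (2 * s / a ^ 2) (Ioi a) s := fun s _ =>
    (((hasDerivAt_id s).div_const a).fun_pow 2).hasDerivWithinAt.congr_deriv (by simp; ring)
  have hmono : MonotoneOn (fun s : ℝ => (s / a) ^ 2) (Ioi a) := fun s (hs : a < s) t _ hst => by
    have : 0 ≤ s / a := div_nonneg (ha.trans hs).le ha.le
    dsimp only
    gcongr
  rw [← image_div_sq_Ioi ha,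
    integral_image_eq_integral_deriv_smul_of_monotoneOn measurableSet_Ioi hderiv hmono,
    ← integral_const_mul]
  refine setIntegral_congr_fun measurableSet_Ioi fun s (hs : a < s) => ?_
  have hs0 : 0 < s := ha.trans hs
  have hpow : ((s / a) ^ 2) ^ (-(3:ℝ)/2) = ((s / a) ^ 3)⁻¹ := by
    rw [← rpow_natCast_mul (by positivity)]
    norm_num
  simp only [smul_eq_mul, hpow]
  field_simp

lemma gaussE_eq_one_sub_two_mul_integral_Ioi (x : ℝ) :
    gaussE x = 1 - 2 * ∫ s in Ioi x, exp (-π * s ^ 2) := by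
  have hint (c : ℝ) := (integrable_exp_neg_mul_sq pi_pos).integrableOn (s := Ioi c)
  rw [gaussE, ← intervalIntegral.integral_Ioi_sub_Ioi' (hint 0) (hint x), integral_gaussian_Ioi,
    div_self pi_ne_zero, sqrt_one]
  ring

lemma gaussE_neg (x : ℝ) : gaussE (-x) = -gaussE x := by
  have h := intervalIntegral.integral_comp_neg (a := x) (b := 0) fun t => exp (-π * t ^ 2)
  simp only [neg_zero, neg_sq] at h
  rw [gaussE, gaussE, ← h, intervalIntegral.integral_symm]
  ring

lemma psiFn_neg (x : ℝ) : psiFn (-x) = psiFn x := by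
  simp only [psiFn, gaussE_neg, neg_sq, neg_mul_neg]

lemma betaFn_zero : betaFn 0 = 1 / π := by
  simp only [betaFn, mul_zero, zero_mul, exp_zero, mul_one]
  rw [integral_Ioi_rpow_of_lt (by norm_num) one_pos]
  field_simp
  norm_num

lemma betaFn_sq_of_pos {x : ℝ} (hx : 0 < x) :
    betaFn (x ^ 2) = exp (-π * x ^ 2) / π - 2 * x * ∫ s in Ioi x, exp (-π * s ^ 2) := by
  have hsubst := integral_Ioi_one_rpow_mul_comp_mul (fun v => exp (-π * v)) hx
  simp only [← mul_assoc] at hsubst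
  rw [betaFn, hsubst, integral_Ioi_exp_neg_mul_sq_div_sq pi_pos hx]
  field_simp

/-- `ψ(x) = |x| + β(x²)` for all real `x`. -/
theorem psi_eq_abs_add_beta (x : ℝ) : psiFn x = |x| + betaFn (x ^ 2) := by
  wlog hx : 0 ≤ x generalizing x
  · simpa only [psiFn_neg, abs_neg, neg_sq] using this (-x) (by linarith)
  rcases hx.eq_or_lt with rfl | hx
  · simp [psiFn, gaussE, betaFn_zero]
  · rw [psiFn, gaussE_eq_one_sub_two_mul_integral_Ioi, betaFn_sq_of_pos hx, abs_of_pos hx]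
    field_simp
    ring
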